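/- Let M be a left GL₂(ℚ)-module and let m ∈ M be fixed by every matrix in T₂(ℚ). Then there exists a GL₂(ℚ)-equivariant additive homomorphism φ : Δ₀ → M with φ(D_∞) = m if and only if m satisfies the Manin relations: m + S·m = 0 and m + R·m + R²·m = 0, where S = [[0,−1],[1,0]] and R = [[0,−1],[1,−1]]; moreover, when it exists, such φ is unique. -/

import Mathlib

noncomputable section
open Matrix MatrixGroups

/-- the projective line `ℙ¹(ℚ)`, as the projectivization of `ℚ²` -/
abbrev ProjLine : Type := Projectivization ℚ (Fin 2 → ℚ)

lemma mulVecLin_injective (γ : GL (Fin 2) ℚ) :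
    Function.Injective ((γ : Matrix (Fin 2) (Fin 2) ℚ).mulVecLin) := by
  have h : Function.LeftInverse (((γ⁻¹ : GL (Fin 2) ℚ) : Matrix (Fin 2) (Fin 2) ℚ).mulVecLin)
      (((γ : GL (Fin 2) ℚ) : Matrix (Fin 2) (Fin 2) ℚ).mulVecLin) := by
    intro v
    have h1 : ((γ⁻¹ : GL (Fin 2) ℚ) : Matrix (Fin 2) (Fin 2) ℚ) *
        ((γ : GL (Fin 2) ℚ) : Matrix (Fin 2) (Fin 2) ℚ) = (1 : Matrix (Fin 2) (Fin 2) ℚ) := by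
      rw [← Units.val_mul, inv_mul_cancel, Units.val_one]
    have h2 := congrFun (congrArg DFunLike.coe (congrArg Matrix.mulVecLin h1)) v
    rw [Matrix.mulVecLin_mul, Matrix.mulVecLin_one] at h2
    exact h2
  exact h.injective

private lemma projMap_congr {f g : (Fin 2 → ℚ) →ₗ[ℚ] (Fin 2 → ℚ)} (h : f = g)
    (hf : Function.Injective f) (x : ProjLine) :
    Projectivization.map f hf x = Projectivization.map g (h ▸ hf) x := by
  subst h; rfl

/-- `GL₂(ℚ)` acts on `ℙ¹(ℚ)` by fractional linear transformations. -/
instance : MulAction (GL (Fin 2) ℚ) ProjLine where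
  smul γ x := Projectivization.map ((γ : Matrix (Fin 2) (Fin 2) ℚ).mulVecLin)
    (mulVecLin_injective γ) x
  one_smul x := by
    have h1 : (((1 : GL (Fin 2) ℚ) : Matrix (Fin 2) (Fin 2) ℚ)).mulVecLin
        = (LinearMap.id : (Fin 2 → ℚ) →ₗ[ℚ] (Fin 2 → ℚ)) := by
      simp [Matrix.mulVecLin_one]
    show Projectivization.map _ (mulVecLin_injective 1) x = x
    rw [projMap_congr h1]
    exact congrFun Projectivization.map_id x
  mul_smul a b x := by
    have h1 : (((a * b : GL (Fin 2) ℚ) : Matrix (Fin 2) (Fin 2) ℚ)).mulVecLin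
        = ((a : Matrix (Fin 2) (Fin 2) ℚ).mulVecLin).comp
            ((b : Matrix (Fin 2) (Fin 2) ℚ).mulVecLin) := by
      simp [Units.val_mul, Matrix.mulVecLin_mul]
    show Projectivization.map _ (mulVecLin_injective (a * b)) x = _
    rw [projMap_congr h1]
    exact congrFun (Projectivization.map_comp _ (mulVecLin_injective b) _
      (mulVecLin_injective a)) x

/-- the total degree of a divisor on `ℙ¹(ℚ)` -/
def degree : (ProjLine →₀ ℤ) →+ ℤ := Finsupp.liftAddHom fun _ => AddMonoidHom.id ℤ

/-- `Δ₀ = Div⁰(ℙ¹(ℚ))`, the group of degree-zero divisors on `ℙ¹(ℚ)` -/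
def Delta0 : AddSubgroup (ProjLine →₀ ℤ) := degree.ker

lemma degree_mapDomain (f : ProjLine → ProjLine) (D : ProjLine →₀ ℤ) :
    degree (Finsupp.mapDomain f D) = degree D := by
  simp only [degree, Finsupp.liftAddHom_apply, AddMonoidHom.id_apply]
  exact Finsupp.sum_mapDomain_index (fun _ => rfl) (fun _ _ _ => rfl)

/-- the induced action of `γ ∈ GL₂(ℚ)` on degree-zero divisors -/
def smulDiv (γ : GL (Fin 2) ℚ) (D : Delta0) : Delta0 :=
  ⟨Finsupp.mapDomain (fun x => γ • x) D.1, by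
    have hD : degree D.1 = 0 := AddMonoidHom.mem_ker.mp D.2
    show Finsupp.mapDomain _ _ ∈ degree.ker
    rw [AddMonoidHom.mem_ker, degree_mapDomain, hD]⟩

/-- the point `∞ = [1:0] ∈ ℙ¹(ℚ)` -/
def inftyPt : ProjLine := Projectivization.mk ℚ ![1, 0] (by
  intro h; simpa using congrFun h 0)

/-- the point `0 = [0:1] ∈ ℙ¹(ℚ)` -/
def zeroPt : ProjLine := Projectivization.mk ℚ ![0, 1] (by
  intro h; simpa using congrFun h 1)

/-- the divisor `D_∞ = [∞] − [0] ∈ Δ₀` -/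
def Dinf : Delta0 :=
  ⟨Finsupp.single inftyPt 1 - Finsupp.single zeroPt 1, by
    show _ ∈ degree.ker
    rw [AddMonoidHom.mem_ker, map_sub]
    simp [degree, Finsupp.liftAddHom_apply_single]⟩


/-- the matrix `S = [[0,−1],[1,0]]` as an element of `GL₂(ℚ)` -/
def Smat : GL (Fin 2) ℚ :=
  ⟨!![0, -1; 1, 0], !![0, 1; -1, 0],
    by norm_num [Matrix.mul_fin_two, Matrix.one_fin_two.symm],
    by norm_num [Matrix.mul_fin_two, Matrix.one_fin_two.symm]⟩

/-- the matrix `R = [[0,−1],[1,−1]]` as an element of `GL₂(ℚ)` -/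
def Rmat : GL (Fin 2) ℚ :=
  ⟨!![0, -1; 1, -1], !![-1, 1; -1, 0],
    by norm_num [Matrix.mul_fin_two, Matrix.one_fin_two.symm],
    by norm_num [Matrix.mul_fin_two, Matrix.one_fin_two.symm]⟩

/-!
`GL₂(ℚ)` acts transitively on ordered pairs of distinct points of `ℙ¹(ℚ)`, the stabiliser of
`(∞, 0)` being the diagonal torus, and transitively on ordered triples of distinct points.
A torus-invariant `m` therefore defines `{x, y} := g • m` for any `g` with `(g ∞, g 0) = (x, y)`.
The relation `m + S m = 0` makes `{·, ·}` antisymmetric and, since `R` permutes `(∞, 0, 1)`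
cyclically, `m + R m + R² m = 0` gives the cocycle relation `{x, y} + {y, z} + {z, x} = 0`.
Hence `D ↦ ∑ D(x) {x, 0}` is an equivariant homomorphism on `Δ₀` mapping `[x] − [y]` to `{x, y}`.
Conversely an equivariant `φ` applied to `S D_∞ = −D_∞` and `D_∞ + R D_∞ + R² D_∞ = 0` yields
the Manin relations, and `φ` is unique because the translates of `D_∞` span `Δ₀`.
-/

section PairSymbol

variable (G : Type*) {X M : Type*} [Group G] [MulAction G X] [AddCommGroup M]
  [DistribMulAction G M] (a b : X) (m : M)

open Classical in
/-- `g • m` at `(g • a, g • b)`, for a `g` picked by choice; `0` off the orbit of `(a, b)`. -/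
def pairSymbol (x y : X) : M :=
  if h : ∃ g : G, g • a = x ∧ g • b = y then h.choose • m else 0

variable {G a b m}

lemma pairSymbol_of_not_exists {x y : X} (h : ¬ ∃ g : G, g • a = x ∧ g • b = y) :
    pairSymbol G a b m x y = 0 :=
  dif_neg h

lemma pairSymbol_smul (hm : ∀ g : G, g • a = a → g • b = b → g • m = m) (g : G) :
    pairSymbol G a b m (g • a) (g • b) = g • m := by
  have h : ∃ g' : G, g' • a = g • a ∧ g' • b = g • b := ⟨g, rfl, rfl⟩
  obtain ⟨ha, hb⟩ := h.choose_spec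
  have hfix : (g⁻¹ * h.choose) • m = m :=
    hm _ (by rw [mul_smul, ha, inv_smul_smul]) (by rw [mul_smul, hb, inv_smul_smul])
  rw [pairSymbol, dif_pos h]
  calc h.choose • m = (g * (g⁻¹ * h.choose)) • m := by rw [mul_inv_cancel_left]
    _ = g • m := by rw [mul_smul, hfix]

lemma pairSymbol_self (hab : a ≠ b) (x : X) : pairSymbol G a b m x x = 0 :=
  pairSymbol_of_not_exists fun ⟨g, ha, hb⟩ => hab (smul_left_cancel g (ha.trans hb.symm))

lemma pairSymbol_smul_smul (hm : ∀ g : G, g • a = a → g • b = b → g • m = m)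
    (γ : G) (x y : X) :
    pairSymbol G a b m (γ • x) (γ • y) = γ • pairSymbol G a b m x y := by
  by_cases h : ∃ g : G, g • a = x ∧ g • b = y
  · obtain ⟨g, rfl, rfl⟩ := h
    rw [← mul_smul, ← mul_smul, pairSymbol_smul hm, pairSymbol_smul hm, mul_smul]
  · have h' : ¬ ∃ g : G, g • a = γ • x ∧ g • b = γ • y := fun ⟨g, ha, hb⟩ =>
      h ⟨γ⁻¹ * g, by rw [mul_smul, ha, inv_smul_smul], by rw [mul_smul, hb, inv_smul_smul]⟩
    rw [pairSymbol_of_not_exists h, pairSymbol_of_not_exists h', smul_zero]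

lemma pairSymbol_swap (hm : ∀ g : G, g • a = a → g • b = b → g • m = m)
    {s : G} (hsa : s • a = b) (hsb : s • b = a) (hs : s • m = -m) (x y : X) :
    pairSymbol G a b m y x = -pairSymbol G a b m x y := by
  by_cases h : ∃ g : G, g • a = x ∧ g • b = y
  · obtain ⟨g, rfl, rfl⟩ := h
    have hgs : pairSymbol G a b m (g • b) (g • a) = (g * s) • m := by
      rw [← pairSymbol_smul hm, mul_smul, hsa, mul_smul, hsb]
    rw [hgs, pairSymbol_smul hm, mul_smul, hs, smul_neg]
  · have h' : ¬ ∃ g : G, g • a = y ∧ g • b = x := fun ⟨g, ha, hb⟩ =>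
      h ⟨g * s, by rw [mul_smul, hsa, hb], by rw [mul_smul, hsb, ha]⟩
    rw [pairSymbol_of_not_exists h, pairSymbol_of_not_exists h', neg_zero]

lemma pairSymbol_cycle (hm : ∀ g : G, g • a = a → g • b = b → g • m = m)
    {r : G} {c : X} (hra : r • a = b) (hrb : r • b = c) (hrc : r • c = a)
    (hr : m + r • m + r ^ 2 • m = 0) (g : G) :
    pairSymbol G a b m (g • a) (g • b) + pairSymbol G a b m (g • b) (g • c) +
      pairSymbol G a b m (g • c) (g • a) = 0 := by
  have h1 : pairSymbol G a b m (g • b) (g • c) = (g * r) • m := by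
    rw [← pairSymbol_smul hm, mul_smul, hra, mul_smul, hrb]
  have h2 : pairSymbol G a b m (g • c) (g • a) = (g * r ^ 2) • m := by
    rw [← pairSymbol_smul hm, pow_two, mul_smul, mul_smul, hra, hrb, mul_smul, mul_smul, hrb,
      hrc]
  rw [h1, h2, pairSymbol_smul hm, mul_smul, mul_smul, ← smul_add, ← smul_add, hr, smul_zero]

end PairSymbol

def onePt : ProjLine := Projectivization.mk ℚ ![1, 1] (by
  intro h; simpa using congrFun h 0)

lemma smul_mk_eq_mk_iff (γ : GL (Fin 2) ℚ) {v w : Fin 2 → ℚ} (hv : v ≠ 0) (hw : w ≠ 0) :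
    γ • Projectivization.mk ℚ v hv = Projectivization.mk ℚ w hw ↔
      ∃ c : ℚ, c • w = (γ : Matrix (Fin 2) (Fin 2) ℚ) *ᵥ v := by
  show Projectivization.map _ (mulVecLin_injective γ) _ = _ ↔ _
  rw [Projectivization.map_mk, Projectivization.mk_eq_mk_iff']
  rfl

lemma smul_mk_eq_mk (γ : GL (Fin 2) ℚ) {v w : Fin 2 → ℚ} (hv : v ≠ 0) (hw : w ≠ 0) (c : ℚ)
    (h : c • w = (γ : Matrix (Fin 2) (Fin 2) ℚ) *ᵥ v) :
    γ • Projectivization.mk ℚ v hv = Projectivization.mk ℚ w hw :=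
  (smul_mk_eq_mk_iff γ hv hw).2 ⟨c, h⟩

lemma Smat_smul_inftyPt : Smat • inftyPt = zeroPt :=
  smul_mk_eq_mk _ _ _ 1 (by ext i; fin_cases i <;> simp [Smat])

lemma Smat_smul_zeroPt : Smat • zeroPt = inftyPt :=
  smul_mk_eq_mk _ _ _ (-1) (by ext i; fin_cases i <;> simp [Smat])

lemma Rmat_smul_inftyPt : Rmat • inftyPt = zeroPt :=
  smul_mk_eq_mk _ _ _ 1 (by ext i; fin_cases i <;> simp [Rmat])

lemma Rmat_smul_zeroPt : Rmat • zeroPt = onePt :=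
  smul_mk_eq_mk _ _ _ (-1) (by ext i; fin_cases i <;> simp [Rmat])

lemma Rmat_smul_onePt : Rmat • onePt = inftyPt :=
  smul_mk_eq_mk _ _ _ (-1) (by ext i; fin_cases i <;> simp [Rmat])

lemma inftyPt_ne_zeroPt : inftyPt ≠ zeroPt := by
  rw [inftyPt, zeroPt, Ne, Projectivization.mk_eq_mk_iff']
  rintro ⟨c, hc⟩
  simpa using congrFun hc 0

lemma eq_diagonal_of_smul_inftyPt_of_smul_zeroPt {t : GL (Fin 2) ℚ}
    (hinf : t • inftyPt = inftyPt) (hzero : t • zeroPt = zeroPt) :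
    ∃ a d : ℚ, (t : Matrix (Fin 2) (Fin 2) ℚ) = !![a, 0; 0, d] := by
  obtain ⟨c, hc⟩ := (smul_mk_eq_mk_iff t _ _).1 hinf
  obtain ⟨c', hc'⟩ := (smul_mk_eq_mk_iff t _ _).1 hzero
  have h10 : (t : Matrix (Fin 2) (Fin 2) ℚ) 1 0 = 0 := by
    simpa [Matrix.mulVec, dotProduct] using (congrFun hc 1).symm
  have h01 : (t : Matrix (Fin 2) (Fin 2) ℚ) 0 1 = 0 := by
    simpa [Matrix.mulVec, dotProduct] using (congrFun hc' 0).symm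
  exact ⟨_, _, by rw [Matrix.eta_fin_two (t : Matrix (Fin 2) (Fin 2) ℚ), h10, h01]⟩

lemma exists_smul_inftyPt_zeroPt {x y : ProjLine} (hxy : x ≠ y) :
    ∃ g : GL (Fin 2) ℚ, g • inftyPt = x ∧ g • zeroPt = y := by
  have hli : LinearIndependent ℚ ![x.rep, y.rep] := by
    have h := (Projectivization.independent_pair_iff_ne x y).2 hxy
    rw [Projectivization.independent_iff] at h
    have hrep : Projectivization.rep ∘ ![x, y] = ![x.rep, y.rep] := by
      ext i : 1; fin_cases i <;> rfl
    rwa [hrep] at h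
  have hA : IsUnit (Matrix.of ![x.rep, y.rep])ᵀ :=
    (Matrix.isUnit_transpose _).2 (Matrix.linearIndependent_rows_iff_isUnit.1 hli)
  refine ⟨hA.unit, ?_, ?_⟩
  · conv_rhs => rw [← x.mk_rep]
    exact smul_mk_eq_mk _ _ _ 1 (by ext i; fin_cases i <;> simp [Matrix.mulVec, dotProduct])
  · conv_rhs => rw [← y.mk_rep]
    exact smul_mk_eq_mk _ _ _ 1 (by ext i; fin_cases i <;> simp [Matrix.mulVec, dotProduct])

lemma exists_diagonal_smul_onePt {p : ProjLine} (hinf : p ≠ inftyPt) (hzero : p ≠ zeroPt) :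
    ∃ t : GL (Fin 2) ℚ, t • inftyPt = inftyPt ∧ t • zeroPt = zeroPt ∧ t • onePt = p := by
  have hp0 : p.rep 0 ≠ 0 := fun h => hzero <| by
    rw [← p.mk_rep, zeroPt, Projectivization.mk_eq_mk_iff']
    exact ⟨p.rep 1, by ext i; fin_cases i <;> simp [h]⟩
  have hp1 : p.rep 1 ≠ 0 := fun h => hinf <| by
    rw [← p.mk_rep, inftyPt, Projectivization.mk_eq_mk_iff']
    exact ⟨p.rep 0, by ext i; fin_cases i <;> simp [h]⟩
  let t := Matrix.GeneralLinearGroup.mkOfDetNeZero !![p.rep 0, 0; 0, p.rep 1]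
    (by simp [hp0, hp1])
  refine ⟨t, smul_mk_eq_mk _ _ _ (p.rep 0) ?_, smul_mk_eq_mk _ _ _ (p.rep 1) ?_, ?_⟩
  · ext i; fin_cases i <;> simp [t]
  · ext i; fin_cases i <;> simp [t]
  · conv_rhs => rw [← p.mk_rep]
    exact smul_mk_eq_mk _ _ _ 1 (by ext i; fin_cases i <;> simp [t])

lemma exists_smul_inftyPt_zeroPt_onePt {x y z : ProjLine} (hxy : x ≠ y) (hyz : y ≠ z)
    (hzx : z ≠ x) :
    ∃ g : GL (Fin 2) ℚ, g • inftyPt = x ∧ g • zeroPt = y ∧ g • onePt = z := by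
  obtain ⟨g, rfl, rfl⟩ := exists_smul_inftyPt_zeroPt hxy
  obtain ⟨t, ht_inf, ht_zero, ht_one⟩ := exists_diagonal_smul_onePt (p := g⁻¹ • z)
    (by rw [Ne, inv_smul_eq_iff]; exact hzx) (by rw [Ne, inv_smul_eq_iff]; exact hyz.symm)
  exact ⟨g * t, by rw [mul_smul, ht_inf], by rw [mul_smul, ht_zero],
    by rw [mul_smul, ht_one, smul_inv_smul]⟩

lemma single_sub_single_mem_Delta0 (x y : ProjLine) :
    Finsupp.single x 1 - Finsupp.single y 1 ∈ Delta0 := by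
  rw [Delta0, AddMonoidHom.mem_ker, map_sub]
  simp [degree]

def diffDivisor (x y : ProjLine) : Delta0 :=
  ⟨Finsupp.single x 1 - Finsupp.single y 1, single_sub_single_mem_Delta0 x y⟩

lemma Dinf_eq_diffDivisor : Dinf = diffDivisor inftyPt zeroPt := rfl

lemma diffDivisor_self (x : ProjLine) : diffDivisor x x = 0 :=
  Subtype.ext (sub_self _)

lemma diffDivisor_swap (x y : ProjLine) : diffDivisor y x = -diffDivisor x y :=
  Subtype.ext (neg_sub _ _).symm

lemma diffDivisor_add_diffDivisor_add_diffDivisor (x y z : ProjLine) :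
    diffDivisor x y + diffDivisor y z + diffDivisor z x = 0 :=
  Subtype.ext (by simp only [diffDivisor, AddSubgroup.coe_add, AddSubgroup.coe_zero]; abel)

lemma smulDiv_diffDivisor (γ : GL (Fin 2) ℚ) (x y : ProjLine) :
    smulDiv γ (diffDivisor x y) = diffDivisor (γ • x) (γ • y) :=
  Subtype.ext (by simp [smulDiv, diffDivisor, Finsupp.mapDomain_sub, Finsupp.mapDomain_single])

lemma sum_zsmul_const {M : Type*} [AddCommGroup M] (D : ProjLine →₀ ℤ) (c : M) :
    (D.sum fun _ n => n • c) = degree D • c :=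
  Finset.sum_smul.symm

lemma eq_sum_smul_diffDivisor (D : Delta0) (b : ProjLine) :
    D = (D : ProjLine →₀ ℤ).sum fun x n => n • diffDivisor x b := by
  have hdeg : degree D = 0 := D.2
  apply Subtype.ext
  rw [← Delta0.coe_subtype, map_finsuppSum]
  simp only [map_zsmul, Delta0.coe_subtype, diffDivisor, smul_sub, Finsupp.sum_sub]
  rw [sum_zsmul_const, hdeg, zero_smul, sub_zero]
  simp only [Finsupp.smul_single_one, Finsupp.sum_single]

section Lift

variable {M : Type*} [AddCommGroup M]

lemma Delta0_hom_ext {φ₁ φ₂ : Delta0 →+ M} (b : ProjLine)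
    (h : ∀ x, φ₁ (diffDivisor x b) = φ₂ (diffDivisor x b)) : φ₁ = φ₂ := by
  ext D
  rw [eq_sum_smul_diffDivisor D b, map_finsuppSum, map_finsuppSum]
  simp only [map_zsmul, h]

def liftDelta0 (f : ProjLine → M) : Delta0 →+ M :=
  (Finsupp.linearCombination ℤ f).toAddMonoidHom.comp Delta0.subtype

lemma liftDelta0_apply (f : ProjLine → M) (D : Delta0) :
    liftDelta0 f D = Finsupp.linearCombination ℤ f D := rfl

lemma liftDelta0_diffDivisor (f : ProjLine → M) (x y : ProjLine) :
    liftDelta0 f (diffDivisor x y) = f x - f y := by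
  simp [liftDelta0_apply, diffDivisor]

lemma liftDelta0_add_const (f : ProjLine → M) (c : M) :
    liftDelta0 (fun x => f x + c) = liftDelta0 f := by
  ext D
  have hdeg : degree D = 0 := D.2
  simp only [liftDelta0_apply, Finsupp.linearCombination_apply, smul_add, Finsupp.sum_add,
    sum_zsmul_const, hdeg, zero_smul, add_zero]

lemma liftDelta0_smulDiv (f : ProjLine → M) (γ : GL (Fin 2) ℚ) (D : Delta0) :
    liftDelta0 f (smulDiv γ D) = liftDelta0 (fun x => f (γ • x)) D :=
  Finsupp.linearCombination_mapDomain ℤ _ _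

variable [DistribMulAction (GL (Fin 2) ℚ) M]

lemma liftDelta0_smul (f : ProjLine → M) (γ : GL (Fin 2) ℚ) (D : Delta0) :
    liftDelta0 (fun x => γ • f x) D = γ • liftDelta0 f D :=
  (Finsupp.apply_linearCombination ℤ (DistribSMul.toAddMonoidHom M γ).toIntLinearMap
    f D).symm

def IsEquivariant (φ : Delta0 →+ M) : Prop :=
  ∀ (γ : GL (Fin 2) ℚ) (D : Delta0), φ (smulDiv γ D) = γ • φ D

lemma isEquivariant_liftDelta0 {f : ProjLine → M} (c : GL (Fin 2) ℚ → M)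
    (hf : ∀ γ x, f (γ • x) = γ • f x + c γ) : IsEquivariant (liftDelta0 f) := by
  intro γ D
  rw [liftDelta0_smulDiv, funext (hf γ), liftDelta0_add_const, liftDelta0_smul]

lemma smulDiv_Smat_Dinf : smulDiv Smat Dinf = -Dinf := by
  rw [Dinf_eq_diffDivisor, smulDiv_diffDivisor, Smat_smul_inftyPt, Smat_smul_zeroPt,
    diffDivisor_swap]

lemma Dinf_add_smulDiv_Rmat_add_smulDiv_Rmat_sq :
    Dinf + smulDiv Rmat Dinf + smulDiv (Rmat ^ 2) Dinf = 0 := by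
  rw [Dinf_eq_diffDivisor, smulDiv_diffDivisor, smulDiv_diffDivisor, pow_two, mul_smul,
    mul_smul, Rmat_smul_inftyPt, Rmat_smul_zeroPt, Rmat_smul_onePt,
    diffDivisor_add_diffDivisor_add_diffDivisor]

lemma IsEquivariant.manin_relations {φ : Delta0 →+ M} (hφ : IsEquivariant φ) :
    φ Dinf + Smat • φ Dinf = 0 ∧ φ Dinf + Rmat • φ Dinf + Rmat ^ 2 • φ Dinf = 0 := by
  constructor
  · rw [← hφ, smulDiv_Smat_Dinf, map_neg, add_neg_cancel]
  · rw [← hφ, ← hφ, ← map_add, ← map_add, Dinf_add_smulDiv_Rmat_add_smulDiv_Rmat_sq,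
      map_zero]

lemma IsEquivariant.ext {φ₁ φ₂ : Delta0 →+ M} (h₁ : IsEquivariant φ₁) (h₂ : IsEquivariant φ₂)
    (h : φ₁ Dinf = φ₂ Dinf) : φ₁ = φ₂ := by
  refine Delta0_hom_ext zeroPt fun x => ?_
  rcases eq_or_ne x zeroPt with rfl | hx
  · rw [diffDivisor_self, map_zero, map_zero]
  · obtain ⟨g, rfl, hg⟩ := exists_smul_inftyPt_zeroPt hx
    rw [← hg, ← smulDiv_diffDivisor, ← Dinf_eq_diffDivisor, h₁, h₂, h]

section ManinSymbol

variable {m : M}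
  (hm : ∀ g : GL (Fin 2) ℚ, g • inftyPt = inftyPt → g • zeroPt = zeroPt → g • m = m)
  (hS : m + Smat • m = 0) (hR : m + Rmat • m + Rmat ^ 2 • m = 0)

local notation "symb" => pairSymbol (GL (Fin 2) ℚ) inftyPt zeroPt m

include hm hS hR in
lemma pairSymbol_cocycle (x y z : ProjLine) : symb x y + symb y z + symb z x = 0 := by
  have hs : Smat • m = -m := eq_neg_of_add_eq_zero_right hS
  have hswap := pairSymbol_swap hm Smat_smul_inftyPt Smat_smul_zeroPt hs
  have hself := pairSymbol_self (G := GL (Fin 2) ℚ) (m := m) inftyPt_ne_zeroPt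
  rcases eq_or_ne x y with rfl | hxy
  · rw [hself, zero_add, hswap x z, add_neg_cancel]
  rcases eq_or_ne y z with rfl | hyz
  · rw [hself, add_zero, hswap x y, add_neg_cancel]
  rcases eq_or_ne z x with rfl | hzx
  · rw [hself, add_zero, hswap z y, add_neg_cancel]
  obtain ⟨g, rfl, rfl, rfl⟩ := exists_smul_inftyPt_zeroPt_onePt hxy hyz hzx
  exact pairSymbol_cycle hm Rmat_smul_inftyPt Rmat_smul_zeroPt Rmat_smul_onePt hR g

include hm hS hR in
lemma pairSymbol_smul_left (γ : GL (Fin 2) ℚ) (x b : ProjLine) :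
    symb (γ • x) b = γ • symb x b + symb (γ • b) b := by
  have h := pairSymbol_cocycle hm hS hR (γ • x) (γ • b) b
  rw [pairSymbol_swap hm Smat_smul_inftyPt Smat_smul_zeroPt (eq_neg_of_add_eq_zero_right hS)
    (γ • x) b, pairSymbol_smul_smul hm] at h
  exact (add_neg_eq_zero.1 h).symm

variable (m) in
def modularSymbolOf : Delta0 →+ M :=
  liftDelta0 fun x => pairSymbol (GL (Fin 2) ℚ) inftyPt zeroPt m x zeroPt

include hm hS hR in
lemma isEquivariant_modularSymbolOf : IsEquivariant (modularSymbolOf m) :=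
  isEquivariant_liftDelta0 _ fun γ x => pairSymbol_smul_left hm hS hR γ x zeroPt

include hm in
lemma modularSymbolOf_Dinf : modularSymbolOf m Dinf = m := by
  rw [modularSymbolOf, Dinf_eq_diffDivisor, liftDelta0_diffDivisor,
    pairSymbol_self inftyPt_ne_zeroPt, sub_zero]
  simpa using pairSymbol_smul hm (1 : GL (Fin 2) ℚ)

end ManinSymbol

end Lift

theorem modular_symbol_exists_iff_manin_relations
    {M : Type*} [AddCommGroup M] [DistribMulAction (GL (Fin 2) ℚ) M]
    (m : M)
    (hm : ∀ γ : GL (Fin 2) ℚ,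
      (∃ a d : ℚ, (γ : Matrix (Fin 2) (Fin 2) ℚ) = !![a, 0; 0, d]) → γ • m = m) :
    ((∃ φ : Delta0 →+ M,
        (∀ (γ : GL (Fin 2) ℚ) (D : Delta0), φ (smulDiv γ D) = γ • φ D) ∧
        φ Dinf = m) ↔
      (m + Smat • m = 0 ∧ m + Rmat • m + Rmat ^ 2 • m = 0)) ∧
    (∀ φ₁ φ₂ : Delta0 →+ M,
      (∀ (γ : GL (Fin 2) ℚ) (D : Delta0), φ₁ (smulDiv γ D) = γ • φ₁ D) →
      φ₁ Dinf = m →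
      (∀ (γ : GL (Fin 2) ℚ) (D : Delta0), φ₂ (smulDiv γ D) = γ • φ₂ D) →
      φ₂ Dinf = m → φ₁ = φ₂) := by
  have hm' : ∀ g : GL (Fin 2) ℚ, g • inftyPt = inftyPt → g • zeroPt = zeroPt → g • m = m :=
    fun g hinf hzero => hm g (eq_diagonal_of_smul_inftyPt_of_smul_zeroPt hinf hzero)
  refine ⟨⟨?_, ?_⟩, fun φ₁ φ₂ h₁ hv₁ h₂ hv₂ => IsEquivariant.ext h₁ h₂ (hv₁.trans hv₂.symm)⟩
  · rintro ⟨φ, hφ, rfl⟩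
    exact IsEquivariant.manin_relations hφ
  · rintro ⟨hS, hR⟩
    exact ⟨modularSymbolOf m, isEquivariant_modularSymbolOf hm' hS hR, modularSymbolOf_Dinf hm'⟩
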